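/- Let K_1, ..., K_d be a well separated family of convex bodies in R^d. For any two choices of points a_i ∈ K_i and b_i ∈ K_i (i = 1, ..., d), the oriented unit normals satisfy v(a_1, ..., a_d) ≠ -v(b_1, ..., b_d). -/

import Mathlib

open Set

/-- The `(d+1) × (d+1)` matrix whose columns are `(v, 0), (a 0, 1), …, (a (d-1), 1)`. -/
noncomputable def liftedMat (d : ℕ) (v : EuclideanSpace ℝ (Fin d))
    (a : Fin d → EuclideanSpace ℝ (Fin d)) : Matrix (Fin (d + 1)) (Fin (d + 1)) ℝ :=
  Matrix.of fun i j =>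
    Fin.lastCases (Fin.cases (0 : ℝ) (fun _ => (1 : ℝ)) j)
      (fun i' => Fin.cases (v i') (fun j' => a j' i') j) i

/-- `v` is the orientation-normalized unit normal to the affine hull of `a 0, …, a (d-1)`. -/
noncomputable def OrientedNormal (d : ℕ) (v : EuclideanSpace ℝ (Fin d))
    (a : Fin d → EuclideanSpace ℝ (Fin d)) : Prop :=
  ‖v‖ = 1 ∧ (∀ i j, (inner ℝ (a i - a j) v : ℝ) = 0) ∧ 0 < (liftedMat d v a).det

/-- The family `K` is well separated. -/
def WellSeparated (d : ℕ) {n : ℕ} (K : Fin n → Set (EuclideanSpace ℝ (Fin d))) : Prop :=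
  ∀ s : Finset (Fin n), s.card ≤ d + 1 →
    ∀ x : Fin n → EuclideanSpace ℝ (Fin d),
      (∀ i ∈ s, x i ∈ convexHull ℝ (K i)) →
      AffineIndependent ℝ (fun i : s => x i)

/-! If `v(a) = -v(b)`, slide each `a i` to `b i` along the segment in `K i` while keeping the
normal vector `v` fixed; `v` stays orthogonal to the moving configuration. The orientation
determinant is positive at `a` and negative at `b` (where `-v` is the positive normal), so it
vanishes somewhere in between. There the points are affinely independent by well separation and
`v` is a nonzero normal, which makes the lifted matrix invertible: a contradiction. -/

open scoped RealInnerProductSpace Matrix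

variable {d : ℕ}

theorem liftedMat_neg (v : EuclideanSpace ℝ (Fin d)) (a : Fin d → EuclideanSpace ℝ (Fin d)) :
    liftedMat d (-v) a = (liftedMat d v a).updateCol 0 (-fun i => liftedMat d v a i 0) := by
  ext i j
  induction i using Fin.lastCases <;> induction j using Fin.cases <;>
    simp [liftedMat, Fin.succ_ne_zero]

theorem det_liftedMat_neg (v : EuclideanSpace ℝ (Fin d))
    (a : Fin d → EuclideanSpace ℝ (Fin d)) :
    (liftedMat d (-v) a).det = -(liftedMat d v a).det := by
  rw [liftedMat_neg, ← neg_one_smul ℝ, Matrix.det_updateCol_smul, Matrix.updateCol_eq_self,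
    neg_one_mul]

theorem continuous_det_liftedMat {X : Type*} [TopologicalSpace X]
    {v : X → EuclideanSpace ℝ (Fin d)} {a : X → Fin d → EuclideanSpace ℝ (Fin d)}
    (hv : Continuous v) (ha : Continuous a) :
    Continuous fun x => (liftedMat d (v x) (a x)).det := by
  refine Continuous.matrix_det (continuous_matrix fun i j => ?_)
  induction i using Fin.lastCases <;> induction j using Fin.cases <;>
    simp only [liftedMat, Matrix.of_apply, Fin.lastCases_last, Fin.lastCases_castSucc,
      Fin.cases_zero, Fin.cases_succ] <;> fun_prop

theorem liftedMat_mulVec_eq_zero {v : EuclideanSpace ℝ (Fin d)}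
    {a : Fin d → EuclideanSpace ℝ (Fin d)} {x : Fin (d + 1) → ℝ}
    (hx : liftedMat d v a *ᵥ x = 0) :
    x 0 • v + ∑ j : Fin d, x j.succ • a j = 0 ∧ ∑ j : Fin d, x j.succ = 0 := by
  constructor
  · ext i
    simpa [liftedMat, Matrix.mulVec, dotProduct, Fin.sum_univ_succ, mul_comm]
      using congrFun hx i.castSucc
  · simpa [liftedMat, Matrix.mulVec, dotProduct, Fin.sum_univ_succ]
      using congrFun hx (Fin.last d)

theorem det_liftedMat_ne_zero {v : EuclideanSpace ℝ (Fin d)}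
    {a : Fin d → EuclideanSpace ℝ (Fin d)} (ha : AffineIndependent ℝ a) (hv : v ≠ 0)
    (horth : ∀ i j, ⟪a i - a j, v⟫ = 0) : (liftedMat d v a).det ≠ 0 := by
  intro hdet
  obtain ⟨x, hx, hker⟩ := Matrix.exists_mulVec_eq_zero_iff.mpr hdet
  obtain ⟨hcomb, hsum⟩ := liftedMat_mulVec_eq_zero hker
  have hsum_inner : ∑ j : Fin d, x j.succ * ⟪a j, v⟫ = 0 := by
    rcases isEmpty_or_nonempty (Fin d) with _ | ⟨⟨i₀⟩⟩
    · simp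
    · have hconst : ∀ j, ⟪a j, v⟫ = ⟪a i₀, v⟫ := fun j => by
        simpa [inner_sub_left, sub_eq_zero] using horth j i₀
      simp [hconst, ← Finset.sum_mul, hsum]
  -- pairing the kernel relation with `v` leaves `x 0 * ‖v‖ ^ 2`
  have hx0 : x 0 = 0 := by
    have h := congrArg (⟪·, v⟫) hcomb
    simp only [inner_add_left, real_inner_smul_left, sum_inner, hsum_inner, inner_zero_left,
      add_zero, real_inner_self_eq_norm_sq] at h
    simpa [hv] using h
  have hxsucc : ∀ j : Fin d, x j.succ = 0 := fun j =>
    affineIndependent_iff.mp ha Finset.univ _ hsum (by simpa [hx0] using hcomb) j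
      (Finset.mem_univ j)
  exact hx (funext fun j => Fin.cases hx0 hxsucc j)

theorem inner_lineMap_sub_lineMap_eq_zero {F : Type*} [NormedAddCommGroup F]
    [InnerProductSpace ℝ F] {p₁ p₂ p₃ p₄ v : F} (h₁ : ⟪p₁ - p₃, v⟫ = 0) (h₂ : ⟪p₂ - p₄, v⟫ = 0)
    (t : ℝ) : ⟪AffineMap.lineMap p₁ p₂ t - AffineMap.lineMap p₃ p₄ t, v⟫ = 0 := by
  rw [← vsub_eq_sub, AffineMap.lineMap_vsub_lineMap, AffineMap.lineMap_apply_module,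
    inner_add_left, real_inner_smul_left, real_inner_smul_left, vsub_eq_sub, vsub_eq_sub, h₁, h₂]
  ring

theorem WellSeparated.affineIndependent {n : ℕ} {K : Fin n → Set (EuclideanSpace ℝ (Fin d))}
    (hK : WellSeparated d K) (hn : n ≤ d + 1) {x : Fin n → EuclideanSpace ℝ (Fin d)}
    (hx : ∀ i, x i ∈ convexHull ℝ (K i)) :
    AffineIndependent ℝ x :=
  (affineIndependent_equiv (Equiv.subtypeUnivEquiv Finset.mem_univ)).mp
    (hK Finset.univ (by simpa using hn) x fun i _ => hx i)

theorem stmt2_general (d : ℕ) (K : Fin d → Set (EuclideanSpace ℝ (Fin d)))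
    (hws : WellSeparated d K)
    (a b : Fin d → EuclideanSpace ℝ (Fin d))
    (ha : ∀ i, a i ∈ K i) (hb : ∀ i, b i ∈ K i)
    (v u : EuclideanSpace ℝ (Fin d))
    (hv : OrientedNormal d v a) (hu : OrientedNormal d u b) : v ≠ -u := by
  rintro rfl
  obtain ⟨hv1, hva, hvdet⟩ := hv
  obtain ⟨-, hub, hudet⟩ := hu
  let c : ℝ → Fin d → EuclideanSpace ℝ (Fin d) := fun t i => AffineMap.lineMap (a i) (b i) t
  have hdet_b : (liftedMat d (-u) (c 1)).det < 0 := by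
    simpa [c, det_liftedMat_neg] using hudet
  obtain ⟨t, ht, hdet_t⟩ := intermediate_value_Icc' zero_le_one
    (continuous_det_liftedMat continuous_const (by fun_prop)).continuousOn
    ⟨hdet_b.le, by simpa [c] using hvdet.le⟩
  refine det_liftedMat_ne_zero (hws.affineIndependent le_self_add ?_) ?_ ?_ hdet_t
  · exact fun i => (convex_convexHull ℝ (K i)).lineMap_mem
      (subset_convexHull ℝ (K i) (ha i)) (subset_convexHull ℝ (K i) (hb i)) ht
  · exact norm_ne_zero_iff.mp (hv1 ▸ one_ne_zero)
  · intro i j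
    refine inner_lineMap_sub_lineMap_eq_zero (hva i j) ?_ t
    rw [inner_neg_right, hub, neg_zero]

theorem stmt2 (d : ℕ) (K : Fin d → Set (EuclideanSpace ℝ (Fin d)))
    (hbody : ∀ i, IsCompact (K i) ∧ Convex ℝ (K i) ∧ (interior (K i)).Nonempty)
    (hws : WellSeparated d K)
    (a b : Fin d → EuclideanSpace ℝ (Fin d))
    (ha : ∀ i, a i ∈ K i) (hb : ∀ i, b i ∈ K i)
    (v u : EuclideanSpace ℝ (Fin d))
    (hv : OrientedNormal d v a) (hu : OrientedNormal d u b) : v ≠ -u :=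
  stmt2_general d K hws a b ha hb v u hv hu
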